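/- arXiv:math/0310227 — 4 statements merged into one kernel-verified Lean document; each statement's English description precedes it below -/
import Mathlib

section
/- Let (R, m, k) be a Noetherian local ring, M a finitely generated R-module, and u a generator of the socle of E_R(k). Then M has no nonzero free direct summands if and only if for every m ∈ M, u ⊗ m = 0 in E_R(k) ⊗_R M. -/
set_option linter.unusedVariables false

open TensorProduct Filter IsLocalRing

section Defs

variable (R : Type*) [CommRing R] (p : ℕ) [Fact p.Prime] [CharP R p]

/-- `M` with the `R`-action twisted by the `e`-th Frobenius: `r • m = r^{p^e} • m`.
For `M = R` this is the module `R^{(e)} ≅ R^{1/p^e}`. -/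
def Twist (R : Type*) (p : ℕ) (M : Type*) (e : ℕ) : Type _ := M

instance (M : Type*) [AddCommGroup M] (e : ℕ) : AddCommGroup (Twist R p M e) :=
  inferInstanceAs (AddCommGroup M)

instance (M : Type*) [AddCommGroup M] [Module R M] (e : ℕ) : Module R (Twist R p M e) where
  smul r m := (r ^ p ^ e • (show M from m) : M)
  one_smul m := by
    change (1 : R) ^ p ^ e • (show M from m) = (show M from m); rw [one_pow, one_smul]
  mul_smul a b m := by
    change (a * b) ^ p ^ e • (show M from m) =
      a ^ p ^ e • (b ^ p ^ e • (show M from m))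
    rw [mul_pow, mul_smul]
  smul_zero r := by
    change r ^ p ^ e • (0 : M) = (0 : M); simp
  smul_add r x y := by
    change r ^ p ^ e • ((show M from x) + (show M from y)) =
      r ^ p ^ e • (show M from x) + r ^ p ^ e • (show M from y)
    rw [smul_add]
  add_smul a b m := by
    change (a + b) ^ p ^ e • (show M from m) =
      a ^ p ^ e • (show M from m) + b ^ p ^ e • (show M from m)
    rw [add_pow_char_pow, add_smul]
  zero_smul m := by
    change (0 : R) ^ p ^ e • (show M from m) = (0 : M)
    rw [zero_pow (pow_ne_zero e (Fact.out : p.Prime).ne_zero), zero_smul]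

/-- The identity map `M → Twist R p M e`. -/
def toTwist (R : Type*) (p : ℕ) {M : Type*} (m : M) (e : ℕ) : Twist R p M e := m

/-- The map `φ_{c,e} : R → R^{1/p^e}`, `1 ↦ c^{1/p^e}`, splits over `R`. -/
def SplitsFrob (c : R) (e : ℕ) : Prop :=
  ∃ ψ : Twist R p R e →ₗ[R] R, ψ (toTwist R p c e) = 1

/-- The splitting prime `𝒫(R)`. -/
def SplittingPrimeSet : Set R := { c | ∀ᶠ e in atTop, ¬ SplitsFrob R p c e }

/-- `R` is `F`-pure: `R → R^{1/p}` splits. -/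
def IsFPure : Prop := SplitsFrob R p 1 1

/-- `R` is `F`-finite: `R^{1/p}` is a finite `R`-module. -/
def IsFFinite : Prop := Module.Finite R (Twist R p R 1)

/-- `R` is strongly `F`-regular. -/
def StronglyFRegular : Prop :=
  ∀ c : R, (∀ Q ∈ minimalPrimes R, c ∉ Q) → ∃ e, SplitsFrob R p c e

/-- `n` is the maximal rank of a free direct summand of `M`:
`M ≅ R^n ⊕ N` with `N` having no nonzero free direct summand. -/
def MaxFreeRank (M : Type*) [AddCommGroup M] [Module R M] (n : ℕ) : Prop :=
  ∃ (N : Submodule R M) (_ : M ≃ₗ[R] ((Fin n → R) × N)),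
    ¬ ∃ g : N →ₗ[R] R, Function.Surjective g

end Defs

section Hull

variable (R : Type*) [CommRing R] [IsLocalRing R]

/-- `E` is an injective hull of the residue field, with socle generator `u`. -/
def IsInjHullSocle (E : Type*) [AddCommGroup E] [Module R E] (u : E) : Prop :=
  Module.Injective R E ∧ u ≠ 0 ∧ (∀ r ∈ maximalIdeal R, r • u = 0) ∧
    (∀ x : E, (∀ r ∈ maximalIdeal R, r • x = 0) → x ∈ Submodule.span R {u}) ∧
    ∀ N : Submodule R E, N ≠ ⊥ → u ∈ N

end Hull

section Ae

variable (R : Type*) [CommRing R] (p : ℕ) [Fact p.Prime] [CharP R p]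

/-- The ideal `A_e = {r ∈ R : r ⊗ u = 0 in R^{(e)} ⊗_R E}`. -/
def AeSet (E : Type*) [AddCommGroup E] [Module R E] (u : E) (e : ℕ) : Set R :=
  { r | (toTwist R p r e ⊗ₜ[R] u : Twist R p R e ⊗[R] E) = 0 }

end Ae

/-- The length of a module, as the Krull dimension of its lattice of submodules. -/
noncomputable def moduleLength (R M : Type*) [CommRing R] [AddCommGroup M] [Module R M] :
    WithBot ℕ∞ := Order.krullDim (Submodule R M)

/-- A regular local ring: the maximal ideal is generated by `dim R` elements. -/
def IsRegularLocal (R : Type*) [CommRing R] [IsLocalRing R] : Prop :=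
  IsNoetherianRing R ∧ ∃ s : Finset R,
    Ideal.span (s : Set R) = maximalIdeal R ∧ (s.card : WithBot ℕ∞) = ringKrullDim R

section MyAux

open Function

universe v

variable {R : Type*} [CommRing R]

section ThetaDef

variable (R) (E : Type*) [AddCommGroup E] [Module R E]
variable (N : Type*) [AddCommGroup N] [Module R N]

/-- The natural map `E ⊗ N → Hom(Hom(N,R), E)`, `e ⊗ n ↦ (φ ↦ φ n • e)`. -/
noncomputable def thetaMap : E ⊗[R] N →ₗ[R] (N →ₗ[R] R) →ₗ[R] E :=
  TensorProduct.lift (LinearMap.mk₂ R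
    (fun e n => (LinearMap.applyₗ n).smulRight e)
    (fun e e' n => by
      refine LinearMap.ext fun φ => ?_
      simp only [LinearMap.smulRight_apply, LinearMap.add_apply, smul_add])
    (fun c e n => by
      refine LinearMap.ext fun φ => ?_
      simp only [LinearMap.smulRight_apply, LinearMap.smul_apply]
      rw [smul_comm])
    (fun e n n' => by
      refine LinearMap.ext fun φ => ?_
      simp only [LinearMap.smulRight_apply, LinearMap.add_apply, map_add,
        LinearMap.applyₗ_apply_apply, add_smul])
    (fun c e n => by
      refine LinearMap.ext fun φ => ?_
      simp only [LinearMap.smulRight_apply, LinearMap.smul_apply, map_smul,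
        LinearMap.applyₗ_apply_apply, smul_eq_mul, mul_smul, smul_assoc]))

variable {R E N}

@[simp] lemma thetaMap_tmul (e : E) (n : N) (φ : N →ₗ[R] R) :
    thetaMap R E N (e ⊗ₜ[R] n) φ = φ n • e := by
  simp [thetaMap]

lemma thetaMap_lTensor {N' : Type*} [AddCommGroup N'] [Module R N']
    (f : N →ₗ[R] N') (x : E ⊗[R] N) (φ : N' →ₗ[R] R) :
    thetaMap R E N' (f.lTensor E x) φ = thetaMap R E N x (φ ∘ₗ f) := by
  induction x using TensorProduct.induction_on with
  | zero => simp
  | tmul e n => simp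
  | add a b ha hb => simp [ha, hb]

lemma thetaMap_pi_repr {j : ℕ} (y : E ⊗[R] (Fin j → R)) :
    y = ∑ i, (thetaMap R E (Fin j → R) y (LinearMap.proj i)) ⊗ₜ[R] (Pi.single i 1) := by
  induction y using TensorProduct.induction_on with
  | zero => simp
  | tmul e v =>
    calc e ⊗ₜ[R] v = e ⊗ₜ[R] (∑ i, Pi.single i (v i)) := by rw [Finset.univ_sum_single]
    _ = ∑ i, e ⊗ₜ[R] (Pi.single i (v i)) := TensorProduct.tmul_sum _ _ _
    _ = ∑ i, (thetaMap R E (Fin j → R) (e ⊗ₜ[R] v) (LinearMap.proj i)) ⊗ₜ[R]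
          (Pi.single i (1 : R)) := by
      refine Finset.sum_congr rfl fun i _ => ?_
      rw [thetaMap_tmul, LinearMap.proj_apply, TensorProduct.smul_tmul]
      congr 1
      funext x
      simp [Pi.single_apply, mul_ite]
  | add a b ha hb =>
    rw [map_add]
    conv_lhs => rw [ha, hb]
    rw [← Finset.sum_add_distrib]
    refine Finset.sum_congr rfl fun i _ => ?_
    rw [LinearMap.add_apply, TensorProduct.add_tmul]

lemma thetaMap_pi_injective {j : ℕ} : Function.Injective (thetaMap R E (Fin j → R)) := by
  have h0 : ∀ y, thetaMap R E (Fin j → R) y = 0 → y = 0 := by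
    intro y hy
    rw [thetaMap_pi_repr y, hy]
    simp
  intro a b hab
  have := h0 (a - b) (by rw [map_sub, hab, sub_self])
  exact sub_eq_zero.mp this

lemma pi_dual_eq_sum {j : ℕ} (φ : (Fin j → R) →ₗ[R] R) :
    φ = ∑ i, φ (Pi.single i 1) • (LinearMap.proj i : (Fin j → R) →ₗ[R] R) := by
  refine LinearMap.ext fun v => ?_
  rw [LinearMap.sum_apply]
  have : φ v = φ (∑ i, Pi.single i (v i)) := by rw [Finset.univ_sum_single]
  rw [this, map_sum]
  refine Finset.sum_congr rfl fun i _ => ?_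
  have h1 : (Pi.single i (v i) : Fin j → R) = v i • (Pi.single i 1 : Fin j → R) := by
    funext x
    simp [Pi.single_apply, mul_ite]
  rw [h1, map_smul, LinearMap.smul_apply, LinearMap.proj_apply, smul_eq_mul, smul_eq_mul,
    mul_comm]

lemma thetaMap_pi_surjective {j : ℕ} : Function.Surjective (thetaMap R E (Fin j → R)) := by
  intro χ
  refine ⟨∑ i, χ (LinearMap.proj i) ⊗ₜ[R] Pi.single i 1, ?_⟩
  ext φ
  rw [map_sum, LinearMap.sum_apply]
  conv_rhs => rw [pi_dual_eq_sum φ, map_sum]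
  refine Finset.sum_congr rfl fun i _ => ?_
  rw [thetaMap_tmul, map_smul]

end ThetaDef

end MyAux

section MyAux2

open Function IsLocalRing

universe w

lemma my_small_of_smul_eq_bot {R : Type*} [CommRing R] {I : Ideal R}
    [Small.{w} (R ⧸ I)] (T : Type*) [AddCommGroup T] [Module R T] [Module.Finite R T]
    (h : ∀ r ∈ I, ∀ x : T, r • x = 0) : Small.{w} T := by
  obtain ⟨n, f, hf⟩ := Module.Finite.exists_fin' R T
  have hsurj : Function.Surjective
      (fun v : Fin n → R ⧸ I => f (fun i => Quotient.out (v i))) := by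
    intro x
    obtain ⟨w, hw⟩ := hf x
    refine ⟨fun i => Ideal.Quotient.mk I (w i), ?_⟩
    set c : Fin n → R := (fun i => Quotient.out (Ideal.Quotient.mk I (w i))) - w with hc
    have hx : ∀ i, c i ∈ I := by
      intro i
      have h2 : (Ideal.Quotient.mk I) (Quotient.out ((Ideal.Quotient.mk I) (w i))) =
          (Ideal.Quotient.mk I) (w i) := Quotient.out_eq _
      rw [Ideal.Quotient.eq] at h2
      simpa [hc] using h2
    have hzero : f c = 0 := by
      rw [pi_eq_sum_univ c, map_sum]
      refine Finset.sum_eq_zero fun i _ => ?_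
      rw [map_smul]
      exact h (c i) (hx i) _
    have heq : (fun i => Quotient.out ((Ideal.Quotient.mk I) (w i))) = c + w := by
      funext i; simp [hc]
    simp only [heq, map_add, hzero, zero_add]
    exact hw
  exact small_of_surjective hsurj

lemma my_small_of_pow_smul_eq_bot {R : Type*} [CommRing R] [IsNoetherianRing R] {I : Ideal R}
    [Small.{w} (R ⧸ I)] :
    ∀ (t : ℕ) (T : Type*) [AddCommGroup T] [Module R T] [Module.Finite R T],
      (I ^ t • ⊤ : Submodule R T) = ⊥ → Small.{w} T := by
  intro t
  induction t with
  | zero =>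
    intro T _ _ _ hT
    simp only [pow_zero, Ideal.one_eq_top, Submodule.top_smul] at hT
    have : Subsingleton T := by
      constructor
      intro a b
      have ha : a ∈ (⊥ : Submodule R T) := hT ▸ Submodule.mem_top
      have hb : b ∈ (⊥ : Submodule R T) := hT ▸ Submodule.mem_top
      rw [Submodule.mem_bot] at ha hb
      rw [ha, hb]
    infer_instance
  | succ t ih =>
    intro T _ _ _ hT
    set T' : Submodule R T := I • ⊤ with hT'
    haveI : Module.Finite R T' := ⟨(Submodule.fg_top _).mpr (IsNoetherian.noetherian T')⟩
    have hmap : Submodule.map T'.subtype (I ^ t • ⊤ : Submodule R T') = ⊥ := by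
      rw [Submodule.map_smul'', Submodule.map_top, Submodule.range_subtype, hT',
        ← Submodule.smul_assoc, Ideal.smul_eq_mul, ← pow_succ]
      exact hT
    have h1 : (I ^ t • ⊤ : Submodule R T') = ⊥ := by
      rw [eq_bot_iff]
      intro x hx
      have : (x : T) ∈ (⊥ : Submodule R T) := hmap ▸ Submodule.mem_map_of_mem hx
      rw [Submodule.mem_bot] at this ⊢
      exact Subtype.ext this
    haveI hsmallT' : Small.{w} T' := ih T' h1
    haveI hsmallQ : Small.{w} (T ⧸ T') := by
      refine my_small_of_smul_eq_bot (I := I) (T ⧸ T') fun r hr y => ?_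
      obtain ⟨x, rfl⟩ := Submodule.Quotient.mk_surjective T' y
      rw [← Submodule.Quotient.mk_smul, Submodule.Quotient.mk_eq_zero]
      exact Submodule.smul_mem_smul hr Submodule.mem_top
    set sct : (T ⧸ T') → T := Function.surjInv (Submodule.Quotient.mk_surjective T') with hsct
    have hsect : ∀ y, Submodule.Quotient.mk (sct y) = y :=
      fun y => Function.surjInv_eq (Submodule.Quotient.mk_surjective T') y
    have hmem : ∀ x : T, sct (Submodule.Quotient.mk x) - x ∈ T' := by
      intro x
      rw [← Submodule.Quotient.eq]
      exact hsect _
    have hinj : Function.Injective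
        (fun x : T => ((Submodule.Quotient.mk x : T ⧸ T'),
          (⟨sct (Submodule.Quotient.mk x) - x, hmem x⟩ : T'))) := by
      intro a b hab
      simp only [Prod.mk.injEq, Subtype.mk.injEq] at hab
      obtain ⟨h1', h2'⟩ := hab
      rw [h1'] at h2'
      have h3 := congrArg (fun z => sct (Submodule.Quotient.mk b) - z) (rfl : a = a)
      have : a = b := by
        have := sub_right_injective h2'
        exact this
      exact this
    exact small_of_injective hinj

end MyAux2

section MyAux3

open Function IsLocalRing

universe w

variable {R : Type*} [CommRing R] [IsLocalRing R]
variable {E : Type w} [AddCommGroup E] [Module R E] {u : E}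

lemma my_pow_ann [IsNoetherianRing R] (hE : IsInjHullSocle R E u) (e : E) :
    ∃ t : ℕ, ∀ r ∈ (maximalIdeal R) ^ t, r • e = 0 := by
  set I : Ideal R := LinearMap.ker (LinearMap.toSpanSingleton R E e) with hI
  have hrad : maximalIdeal R ≤ I.radical := by
    intro r hr
    have key : ∃ n : ℕ, r ^ n • e = 0 := by
      by_contra hcon
      push_neg at hcon
      have mono : Monotone (fun n : ℕ =>
          LinearMap.ker (LinearMap.toSpanSingleton R E (r ^ n • e))) := by
        apply monotone_nat_of_le_succ
        intro n a ha
        rw [LinearMap.mem_ker, LinearMap.toSpanSingleton_apply] at ha ⊢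
        rw [pow_succ, mul_comm, mul_smul, smul_comm]
        rw [ha, smul_zero]
      obtain ⟨N, hN⟩ := monotone_stabilizes_iff_noetherian.mpr
        (inferInstance : IsNoetherian R R) ⟨_, mono⟩
      have hne : r ^ N • e ≠ 0 := hcon N
      have husp : u ∈ Submodule.span R {r ^ N • e} := by
        refine hE.2.2.2.2 _ ?_
        simpa [Submodule.span_singleton_eq_bot] using hne
      obtain ⟨s, hs⟩ := Submodule.mem_span_singleton.mp husp
      have hru : r • u = 0 := hE.2.2.1 r hr
      have hmem : s ∈ LinearMap.ker (LinearMap.toSpanSingleton R E (r ^ (N + 1) • e)) := by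
        rw [LinearMap.mem_ker, LinearMap.toSpanSingleton_apply]
        rw [pow_succ, mul_comm, mul_smul, smul_comm s r, hs, hru]
      have h_eq : LinearMap.ker (LinearMap.toSpanSingleton R E (r ^ N • e)) =
          LinearMap.ker (LinearMap.toSpanSingleton R E (r ^ (N + 1) • e)) :=
        hN (N + 1) (Nat.le_succ N)
      rw [← h_eq] at hmem
      rw [LinearMap.mem_ker, LinearMap.toSpanSingleton_apply, hs] at hmem
      exact hE.2.1 hmem
    obtain ⟨n, hn⟩ := key
    exact ⟨n, by simpa [hI, LinearMap.mem_ker, LinearMap.toSpanSingleton_apply] using hn⟩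
  obtain ⟨t, ht⟩ := Ideal.exists_pow_le_of_le_radical_of_fg hrad (IsNoetherian.noetherian _)
  refine ⟨t, fun r hr => ?_⟩
  have := ht hr
  rw [hI, LinearMap.mem_ker, LinearMap.toSpanSingleton_apply] at this
  exact this

lemma my_exists_pow_ann_map [IsNoetherianRing R] (hE : IsInjHullSocle R E u)
    (X : Type*) [AddCommGroup X] [Module R X] [Module.Finite R X] (g : X →ₗ[R] E) :
    ∃ t : ℕ, ∀ r ∈ (maximalIdeal R) ^ t, ∀ x : X, r • g x = 0 := by
  obtain ⟨s, hs⟩ := Module.finite_def.mp (inferInstance : Module.Finite R X)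
  choose t ht using fun y : {y // y ∈ s} => my_pow_ann hE (g y)
  refine ⟨s.attach.sup t, fun r hr x => ?_⟩
  have hx : x ∈ Submodule.span R (s : Set X) := hs ▸ Submodule.mem_top
  have hsub : Submodule.span R (s : Set X) ≤
      Submodule.comap g (Submodule.torsionBySet R E ((maximalIdeal R ^ s.attach.sup t : Ideal R) :
        Set R)) := by
    rw [Submodule.span_le]
    intro y hy
    simp only [SetLike.mem_coe, Submodule.mem_comap]
    rw [Submodule.mem_torsionBySet_iff]
    rintro ⟨a, ha⟩
    have hle : (maximalIdeal R) ^ s.attach.sup t ≤ (maximalIdeal R) ^ t ⟨y, hy⟩ :=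
      Ideal.pow_le_pow_right (Finset.le_sup (Finset.mem_attach s ⟨y, hy⟩))
    exact ht ⟨y, hy⟩ a (hle ha)
  have := hsub hx
  rw [Submodule.mem_comap, Submodule.mem_torsionBySet_iff] at this
  exact this ⟨r, hr⟩

lemma my_small_residue (hE : IsInjHullSocle R E u) :
    Small.{w} (R ⧸ maximalIdeal R) := by
  have hle : maximalIdeal R ≤ LinearMap.ker (LinearMap.toSpanSingleton R E u) := by
    intro r hr
    rw [LinearMap.mem_ker, LinearMap.toSpanSingleton_apply]
    exact hE.2.2.1 r hr
  set g : R ⧸ maximalIdeal R →ₗ[R] E :=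
    Submodule.liftQ (maximalIdeal R) (LinearMap.toSpanSingleton R E u) hle with hg
  have hinj : Function.Injective g := by
    rw [← LinearMap.ker_eq_bot, hg]
    apply Submodule.ker_liftQ_eq_bot
    intro r hr
    rw [LinearMap.mem_ker, LinearMap.toSpanSingleton_apply] at hr
    by_contra hmem
    have hu : IsUnit r := not_not.mp
      (fun hnu => hmem ((IsLocalRing.mem_maximalIdeal r).mpr (mem_nonunits_iff.mpr hnu)))
    have : u = 0 := by
      have h0 : ((hu.unit⁻¹ : Rˣ) : R) • (r • u) = 0 := by rw [hr, smul_zero]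
      rwa [smul_smul, IsUnit.val_inv_mul, one_smul] at h0
    exact hE.2.1 this
  exact small_of_injective hinj

end MyAux3

section MyAux4

open Function IsLocalRing

universe w u

lemma my_extend_small {R : Type*} [CommRing R] {E : Type w} [AddCommGroup E] [Module R E]
    (hInj : Module.Injective R E)
    {X Y : Type*} [AddCommGroup X] [Module R X] [AddCommGroup Y] [Module R Y]
    [Small.{w} X] [Small.{w} Y]
    (f : X →ₗ[R] Y) (hf : Function.Injective f) (g : X →ₗ[R] E) :
    ∃ h : Y →ₗ[R] E, ∀ x, h (f x) = g x := by
  obtain ⟨h', hh'⟩ := hInj.out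
    ((Shrink.linearEquiv R Y).symm.toLinearMap ∘ₗ f ∘ₗ (Shrink.linearEquiv R X).toLinearMap)
    (((Shrink.linearEquiv R Y).symm.injective.comp hf).comp (Shrink.linearEquiv R X).injective)
    (g ∘ₗ (Shrink.linearEquiv R X).toLinearMap)
  refine ⟨h' ∘ₗ (Shrink.linearEquiv R Y).symm.toLinearMap, fun x => ?_⟩
  have hx := hh' ((Shrink.linearEquiv R X).symm x)
  simp only [LinearMap.comp_apply, LinearEquiv.coe_coe, LinearEquiv.apply_symm_apply] at hx ⊢
  exact hx

lemma my_extend_fg {R : Type u} [CommRing R] [IsNoetherianRing R] [IsLocalRing R]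
    {E : Type w} [AddCommGroup E] [Module R E] {u : E} (hE : IsInjHullSocle R E u)
    {X Y : Type u} [AddCommGroup X] [Module R X] [AddCommGroup Y] [Module R Y]
    [Module.Finite R X] [Module.Finite R Y]
    (f : X →ₗ[R] Y) (hf : Function.Injective f) (g : X →ₗ[R] E) :
    ∃ h : Y →ₗ[R] E, ∀ x, h (f x) = g x := by
  haveI : Small.{w} (R ⧸ maximalIdeal R) := my_small_residue hE
  obtain ⟨t, ht⟩ := my_exists_pow_ann_map hE X g
  obtain ⟨k, hk⟩ := Ideal.exists_pow_inf_eq_pow_smul (maximalIdeal R) (LinearMap.range f : Submodule R Y)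
  set s := t + k with hs
  have hAR : ((maximalIdeal R) ^ s • ⊤ : Submodule R Y) ⊓ LinearMap.range f ≤
      Submodule.map f ((maximalIdeal R) ^ t • ⊤ : Submodule R X) := by
    have h1 := hk s (by omega)
    have hst : s - k = t := by omega
    rw [hst] at h1
    calc ((maximalIdeal R) ^ s • ⊤ : Submodule R Y) ⊓ LinearMap.range f
        = (maximalIdeal R) ^ t • ((maximalIdeal R) ^ k • ⊤ ⊓ LinearMap.range f) := h1
      _ ≤ (maximalIdeal R) ^ t • LinearMap.range f := smul_mono_right _ inf_le_right
      _ = Submodule.map f ((maximalIdeal R) ^ t • ⊤) := by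
          rw [Submodule.map_smul'', Submodule.map_top]
  set W : Submodule R X := Submodule.comap f ((maximalIdeal R) ^ s • ⊤ : Submodule R Y) with hW
  have hWg : W ≤ LinearMap.ker g := by
    intro x hx
    rw [hW, Submodule.mem_comap] at hx
    have hmem : f x ∈ ((maximalIdeal R) ^ s • ⊤ : Submodule R Y) ⊓ LinearMap.range f :=
      ⟨hx, ⟨x, rfl⟩⟩
    obtain ⟨x', hx', hfx⟩ := hAR hmem
    have hxx : x' = x := hf hfx
    subst hxx
    rw [LinearMap.mem_ker]
    have hle : ((maximalIdeal R) ^ t • ⊤ : Submodule R X) ≤ LinearMap.ker g := by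
      rw [Submodule.smul_le]
      intro r hr n _
      rw [LinearMap.mem_ker, map_smul]
      exact ht r hr n
    exact LinearMap.mem_ker.mp (hle hx')
  set Ytop : Submodule R Y := (maximalIdeal R) ^ s • ⊤ with hYtop
  set g' : (X ⧸ W) →ₗ[R] E := W.liftQ g hWg with hg'
  have hWle : W ≤ LinearMap.ker (Ytop.mkQ ∘ₗ f) := by
    intro x hx
    rw [LinearMap.mem_ker, LinearMap.comp_apply, Submodule.mkQ_apply,
      Submodule.Quotient.mk_eq_zero]
    exact Submodule.mem_comap.mp hx
  set f' : (X ⧸ W) →ₗ[R] (Y ⧸ Ytop) := W.liftQ (Ytop.mkQ ∘ₗ f) hWle with hf2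
  have hf'inj : Function.Injective f' := by
    rw [← LinearMap.ker_eq_bot, hf2, Submodule.ker_liftQ]
    have hker : LinearMap.ker (Ytop.mkQ ∘ₗ f) = W := by
      ext x
      rw [LinearMap.mem_ker, LinearMap.comp_apply, Submodule.mkQ_apply,
        Submodule.Quotient.mk_eq_zero, hW, Submodule.mem_comap]
    rw [hker, eq_bot_iff]
    rintro y hy
    obtain ⟨x, hxW, rfl⟩ := Submodule.mem_map.mp hy
    rw [Submodule.mem_bot, Submodule.mkQ_apply, Submodule.Quotient.mk_eq_zero]
    exact hxW
  haveI hsX : Small.{w} (X ⧸ W) := by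
    refine my_small_of_pow_smul_eq_bot (I := maximalIdeal R) s (X ⧸ W) ?_
    rw [eq_bot_iff]
    refine Submodule.smul_le.mpr fun r hr n _ => ?_
    obtain ⟨x, rfl⟩ := Submodule.Quotient.mk_surjective W n
    rw [Submodule.mem_bot, ← Submodule.Quotient.mk_smul, Submodule.Quotient.mk_eq_zero, hW,
      Submodule.mem_comap, map_smul]
    exact Submodule.smul_mem_smul hr Submodule.mem_top
  haveI hsY : Small.{w} (Y ⧸ Ytop) := by
    refine my_small_of_pow_smul_eq_bot (I := maximalIdeal R) s (Y ⧸ Ytop) ?_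
    rw [eq_bot_iff]
    refine Submodule.smul_le.mpr fun r hr n _ => ?_
    obtain ⟨x, rfl⟩ := Submodule.Quotient.mk_surjective Ytop n
    rw [Submodule.mem_bot, ← Submodule.Quotient.mk_smul, Submodule.Quotient.mk_eq_zero, hYtop]
    exact Submodule.smul_mem_smul hr Submodule.mem_top
  obtain ⟨h', hh'⟩ := my_extend_small hE.1 f' hf'inj g'
  refine ⟨h' ∘ₗ Ytop.mkQ, fun x => ?_⟩
  have hkey := hh' (W.mkQ x)
  have h1 : f' (W.mkQ x) = Ytop.mkQ (f x) := by
    rw [hf2, Submodule.mkQ_apply, Submodule.liftQ_apply, LinearMap.comp_apply]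
  have h2 : g' (W.mkQ x) = g x := by
    rw [hg', Submodule.mkQ_apply, Submodule.liftQ_apply]
  rw [h1, h2] at hkey
  exact hkey

lemma my_noetherian_pi_dual {R : Type*} [CommRing R] [IsNoetherianRing R] (c : ℕ) :
    IsNoetherian R ((Fin c → R) →ₗ[R] R) := by
  have e : ((Fin c → R) →ₗ[R] R) ≃ₗ[R] (Fin c → R) :=
    (LinearMap.lsum R (fun _ : Fin c => R) R).symm.trans
      (LinearEquiv.piCongrRight fun _ => LinearMap.ringLmapEquivSelf R R R)
  exact isNoetherian_of_linearEquiv e.symm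

lemma my_finite_dual {R : Type*} [CommRing R] [IsNoetherianRing R]
    (K : Type*) [AddCommGroup K] [Module R K] [Module.Finite R K] :
    Module.Finite R (K →ₗ[R] R) := by
  obtain ⟨c, p, hp⟩ := Module.Finite.exists_fin' R K
  haveI := my_noetherian_pi_dual (R := R) c
  refine Module.Finite.of_injective (LinearMap.lcomp R R p) ?_
  intro φ₁ φ₂ h
  refine LinearMap.ext fun x => ?_
  obtain ⟨v, rfl⟩ := hp x
  exact LinearMap.congr_fun h v

lemma my_theta_fg_surjective {R : Type u} [CommRing R] [IsNoetherianRing R] [IsLocalRing R]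
    {E : Type w} [AddCommGroup E] [Module R E] {u : E} (hE : IsInjHullSocle R E u)
    (K : Type u) [AddCommGroup K] [Module R K] [Module.Finite R K] :
    Function.Surjective (thetaMap R E K) := by
  intro χ
  obtain ⟨c, p, hp⟩ := Module.Finite.exists_fin' R K
  haveI := my_noetherian_pi_dual (R := R) c
  haveI : Module.Finite R ((Fin c → R) →ₗ[R] R) := ⟨IsNoetherian.noetherian ⊤⟩
  haveI : Module.Finite R (K →ₗ[R] R) := my_finite_dual K
  have hinj : Function.Injective (LinearMap.lcomp R R p) := by
    intro φ₁ φ₂ h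
    refine LinearMap.ext fun x => ?_
    obtain ⟨v, rfl⟩ := hp x
    exact LinearMap.congr_fun h v
  obtain ⟨χt, hχt⟩ := my_extend_fg hE (LinearMap.lcomp R R p) hinj χ
  obtain ⟨yc, hyc⟩ := thetaMap_pi_surjective (R := R) (E := E) (j := c) χt
  refine ⟨p.lTensor E yc, LinearMap.ext fun φ => ?_⟩
  rw [thetaMap_lTensor, hyc]
  exact hχt φ

end MyAux4


/-- A finitely generated module `M` over a local ring has no nonzero free
direct summand (equivalently, there is no surjection `M → R`) iff `u ⊗ m = 0` in
`E_R(k) ⊗_R M` for every `m ∈ M`, where `u` generates the socle of `E_R(k)`. -/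
theorem no_free_summand_iff_socle_tensor_zero
    (R : Type*) [CommRing R] [IsNoetherianRing R] [IsLocalRing R]
    (E : Type*) [AddCommGroup E] [Module R E] (u : E) (hE : IsInjHullSocle R E u)
    (M : Type*) [AddCommGroup M] [Module R M] [Module.Finite R M] :
    (¬ ∃ π : M →ₗ[R] R, Function.Surjective π) ↔
      ∀ m : M, (u ⊗ₜ[R] m : E ⊗[R] M) = 0 := by
  classical
  constructor
  · intro hno m
    obtain ⟨n, q, hq⟩ := Module.Finite.exists_fin' R M
    set K : Submodule R (Fin n → R) := LinearMap.ker q with hK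
    haveI : Module.Finite R K := Module.Finite.of_injective K.subtype Subtype.val_injective
    have hzero : ∀ φ : M →ₗ[R] R, φ m • u = 0 := by
      intro φ
      have hmem : φ m ∈ maximalIdeal R := by
        by_contra hmem
        have hu : IsUnit (φ m) := not_not.mp
          (fun hnu => hmem ((IsLocalRing.mem_maximalIdeal _).mpr (mem_nonunits_iff.mpr hnu)))
        refine hno ⟨φ, fun r => ⟨(r * ((hu.unit⁻¹ : Rˣ) : R)) • m, ?_⟩⟩
        rw [map_smul, smul_eq_mul, mul_assoc, IsUnit.val_inv_mul, mul_one]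
      exact hE.2.2.1 _ hmem
    obtain ⟨y, hy⟩ := LinearMap.lTensor_surjective E hq (u ⊗ₜ[R] m)
    set ρ : ((Fin n → R) →ₗ[R] R) →ₗ[R] (K →ₗ[R] R) := LinearMap.lcomp R R K.subtype with hρ
    set ψ : ((Fin n → R) →ₗ[R] R) →ₗ[R] E := thetaMap R E (Fin n → R) y with hψ
    have hker : LinearMap.ker ρ ≤ LinearMap.ker ψ := by
      intro φ hφ
      rw [LinearMap.mem_ker] at hφ ⊢
      have hle : LinearMap.ker q ≤ LinearMap.ker φ := by
        intro x hx
        have h0 := LinearMap.congr_fun hφ ⟨x, hx⟩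
        exact h0
      set φbar : M →ₗ[R] R :=
        ((LinearMap.ker q).liftQ φ hle) ∘ₗ (q.quotKerEquivOfSurjective hq).symm.toLinearMap
        with hφbar
      have hfact : ∀ v, φbar (q v) = φ v := by
        intro v
        have h1 : (q.quotKerEquivOfSurjective hq) (Submodule.Quotient.mk v) = q v := by
          simp [LinearMap.quotKerEquivOfSurjective, LinearMap.quotKerEquivRange_apply_mk]
        have h2 : (q.quotKerEquivOfSurjective hq).symm (q v) = Submodule.Quotient.mk v := by
          rw [LinearEquiv.symm_apply_eq, h1]
        rw [hφbar]
        simp only [LinearMap.comp_apply, LinearEquiv.coe_coe, h2, Submodule.liftQ_apply]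
      have hφeq : φ = φbar ∘ₗ q := by
        refine LinearMap.ext fun v => ?_
        rw [LinearMap.comp_apply, hfact]
      rw [hψ, hφeq, ← thetaMap_lTensor q y φbar, hy, thetaMap_tmul]
      exact hzero φbar
    set ψbar : (((Fin n → R) →ₗ[R] R) ⧸ LinearMap.ker ρ) →ₗ[R] E :=
      (LinearMap.ker ρ).liftQ ψ hker with hψbar
    set ρbar : (((Fin n → R) →ₗ[R] R) ⧸ LinearMap.ker ρ) →ₗ[R] (K →ₗ[R] R) :=
      (LinearMap.ker ρ).liftQ ρ le_rfl with hρbar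
    have hρbarinj : Function.Injective ρbar := by
      rw [← LinearMap.ker_eq_bot, hρbar]
      exact Submodule.ker_liftQ_eq_bot _ _ _ le_rfl
    haveI := my_noetherian_pi_dual (R := R) n
    haveI : Module.Finite R ((Fin n → R) →ₗ[R] R) := ⟨IsNoetherian.noetherian ⊤⟩
    haveI : Module.Finite R (K →ₗ[R] R) := my_finite_dual K
    obtain ⟨χ, hχ⟩ := my_extend_fg hE ρbar hρbarinj ψbar
    have hχρ : ∀ φ, χ (ρ φ) = ψ φ := by
      intro φ
      have h1 := hχ (Submodule.Quotient.mk φ)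
      rw [hρbar, Submodule.liftQ_apply] at h1
      rw [h1, hψbar, Submodule.liftQ_apply]
    obtain ⟨z, hz⟩ := my_theta_fg_surjective hE K χ
    have hyz : y = K.subtype.lTensor E z := by
      refine thetaMap_pi_injective ?_
      refine LinearMap.ext fun φ => ?_
      rw [thetaMap_lTensor K.subtype z φ, hz]
      have : χ (φ ∘ₗ K.subtype) = χ (ρ φ) := rfl
      rw [this, hχρ, hψ]
    have hcomp : q ∘ₗ K.subtype = 0 := by
      refine LinearMap.ext fun x => ?_
      exact LinearMap.mem_ker.mp x.2
    rw [← hy, hyz, ← LinearMap.lTensor_comp_apply, hcomp, LinearMap.lTensor_zero,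
      LinearMap.zero_apply]
  · rintro hall ⟨π, hπ⟩
    obtain ⟨m₀, hm₀⟩ := hπ 1
    have h0 := congrArg (fun x : E ⊗[R] M => thetaMap R E M x π) (hall m₀)
    simp only [map_zero, LinearMap.zero_apply, thetaMap_tmul, hm₀, one_smul] at h0
    exact hE.2.1 h0
end

section
/- Let (R, m, k) be an F-finite reduced local ring of characteristic p. For q = p^e and c ∈ R, let φ_{c,e} : R → R^{1/q} be the R-linear map sending 1 to c^{1/q}. Then A_e = { c ∈ R : φ_{c,e} does not split over R }, where A_e = { r ∈ R : r ⊗ u = 0 in R^{(e)} ⊗_R E_R(k) }. -/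
set_option linter.unusedVariables false

open TensorProduct Filter IsLocalRing

section Theta
variable {R : Type*} [CommRing R] {E : Type*} [AddCommGroup E] [Module R E]

/-- `θ : M ⊗ E → Hom(Hom(M,R), E)`, `m ⊗ x ↦ (ψ ↦ ψ m • x)`. -/
noncomputable def theta (M : Type*) [AddCommGroup M] [Module R M] :
    M ⊗[R] E →ₗ[R] ((M →ₗ[R] R) →ₗ[R] E) :=
  TensorProduct.lift
  { toFun := fun m =>
    { toFun := fun x =>
      { toFun := fun ψ => ψ m • x
        map_add' := fun ψ ψ' => by
          show (ψ + ψ') m • x = ψ m • x + ψ' m • x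
          rw [LinearMap.add_apply, add_smul]
        map_smul' := fun r ψ => by
          show (r • ψ) m • x = r • (ψ m • x)
          rw [LinearMap.smul_apply, smul_assoc] }
      map_add' := fun x x' => LinearMap.ext fun ψ =>
        show ψ m • (x + x') = ψ m • x + ψ m • x' from smul_add _ _ _
      map_smul' := fun r x => LinearMap.ext fun ψ =>
        show ψ m • (r • x) = r • (ψ m • x) from smul_comm _ _ _ }
    map_add' := fun m m' => LinearMap.ext fun x => LinearMap.ext fun ψ =>
      show ψ (m + m') • x = ψ m • x + ψ m' • x by rw [map_add, add_smul]
    map_smul' := fun r m => LinearMap.ext fun x => LinearMap.ext fun ψ =>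
      show ψ (r • m) • x = r • (ψ m • x) by rw [map_smul, smul_assoc] }

@[simp] lemma theta_tmul {M : Type*} [AddCommGroup M] [Module R M] (m : M) (x : E)
    (ψ : M →ₗ[R] R) : theta M (m ⊗ₜ[R] x) ψ = ψ m • x := rfl

lemma theta_natural {M N : Type*} [AddCommGroup M] [Module R M] [AddCommGroup N] [Module R N]
    (f : M →ₗ[R] N) (w : M ⊗[R] E) (ψ : N →ₗ[R] R) :
    theta N (f.rTensor E w) ψ = theta M w (ψ ∘ₗ f) := by
  induction w with
  | zero => simp
  | tmul m x => simp
  | add a b ha hb => simp [ha, hb]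

/-- Inverse of `theta` on finite free modules. -/
noncomputable def sigma (n : ℕ) :
    (((Fin n → R) →ₗ[R] R) →ₗ[R] E) →ₗ[R] ((Fin n → R) ⊗[R] E) :=
  ∑ i : Fin n, (TensorProduct.mk R (Fin n → R) E (Pi.single i 1)).comp
    (LinearMap.applyₗ (LinearMap.proj i))

lemma sigma_apply (n : ℕ) (h : ((Fin n → R) →ₗ[R] R) →ₗ[R] E) :
    sigma n h = ∑ i : Fin n, (Pi.single i 1 : Fin n → R) ⊗ₜ[R] h (LinearMap.proj i) := by
  simp [sigma]

lemma sigma_theta (n : ℕ) (w : (Fin n → R) ⊗[R] E) : sigma n (theta _ w) = w := by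
  induction w with
  | zero => simp
  | tmul m x =>
    rw [sigma_apply]
    have : ∀ i : Fin n, (Pi.single i 1 : Fin n → R) ⊗ₜ[R] (theta (Fin n → R) (m ⊗ₜ[R] x))
        (LinearMap.proj i) = (Pi.single i (m i) : Fin n → R) ⊗ₜ[R] x := by
      intro i
      rw [theta_tmul]
      show (Pi.single i 1 : Fin n → R) ⊗ₜ[R] (m i • x) = _
      rw [← TensorProduct.smul_tmul]
      congr 1
      ext j
      by_cases hj : j = i
      · subst hj; simp
      · simp [Pi.single_eq_of_ne hj]
    rw [Finset.sum_congr rfl fun i _ => this i, ← TensorProduct.sum_tmul,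
      Finset.univ_sum_single]
  | add a b ha hb => simp [map_add, ha, hb]

lemma theta_sigma (n : ℕ) (h : ((Fin n → R) →ₗ[R] R) →ₗ[R] E) : theta _ (sigma n h) = h := by
  ext ψ
  rw [sigma_apply, map_sum, LinearMap.sum_apply]
  have : ∀ i : Fin n, theta (Fin n → R) ((Pi.single i 1 : Fin n → R) ⊗ₜ[R] h (LinearMap.proj i)) ψ
      = h (ψ (Pi.single i 1) • LinearMap.proj i) := by
    intro i; rw [theta_tmul, map_smul]
  rw [Finset.sum_congr rfl fun i _ => this i, ← map_sum]
  congr 1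
  refine LinearMap.ext fun v => ?_
  simp only [LinearMap.coe_sum, Finset.sum_apply, LinearMap.smul_apply, LinearMap.proj_apply,
    smul_eq_mul]
  have : ∀ i : Fin n, ψ (Pi.single i 1) * v i = ψ (Pi.single i (v i)) := by
    intro i
    rw [mul_comm, ← smul_eq_mul, ← map_smul]
    congr 1
    ext j
    by_cases hj : j = i
    · subst hj; simp
    · simp [Pi.single_eq_of_ne hj]
  rw [Finset.sum_congr rfl fun i _ => this i, ← map_sum]
  congr 1
  exact Finset.univ_sum_single v

end Theta


section Inj
universe u v
variable {R : Type u} [CommRing R] [IsNoetherianRing R] [Small.{v} R]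
  {E : Type v} [AddCommGroup E] [Module R E]

theorem theta_injective (hE : Module.Injective R E)
    (M : Type u) [AddCommGroup M] [Module R M] [Module.Finite R M] :
    Function.Injective (theta (R := R) (E := E) M) := by
  have hBaer : Module.Baer R E := Module.Baer.of_injective hE
  obtain ⟨b, π, hπ⟩ := Module.Finite.exists_fin' R M
  haveI : Module.Finite R (LinearMap.ker π) :=
    Module.Finite.iff_fg.mpr (IsNoetherian.noetherian _)
  obtain ⟨a, α₀, hα₀⟩ := Module.Finite.exists_fin' R (LinearMap.ker π)
  set α : (Fin a → R) →ₗ[R] (Fin b → R) := (LinearMap.ker π).subtype ∘ₗ α₀ with hα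
  have hrange : LinearMap.range α = LinearMap.ker π := by
    rw [hα, LinearMap.range_comp, LinearMap.range_eq_top.mpr hα₀, Submodule.map_top,
      Submodule.range_subtype]
  have hexact : Function.Exact α π := LinearMap.exact_iff.mpr hrange.symm
  rw [← LinearMap.ker_eq_bot]
  rw [Submodule.eq_bot_iff]
  intro z hz
  rw [LinearMap.mem_ker] at hz
  obtain ⟨w, rfl⟩ := LinearMap.rTensor_surjective E hπ z
  set g : ((Fin b → R) →ₗ[R] R) →ₗ[R] E := theta _ w with hg
  -- g vanishes on the kernel of the dual of α
  set αd : ((Fin b → R) →ₗ[R] R) →ₗ[R] ((Fin a → R) →ₗ[R] R) := α.lcomp R R with hαd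
  have hαd_apply : ∀ φ, αd φ = φ ∘ₗ α := fun φ => rfl
  have hg0 : LinearMap.ker αd ≤ LinearMap.ker g := by
    intro φ hφ
    rw [LinearMap.mem_ker] at hφ ⊢
    -- φ kills ker π = range α, so φ factors through π
    have hker : LinearMap.ker π ≤ LinearMap.ker φ := by
      rw [← hrange]
      rintro _ ⟨x, rfl⟩
      rw [LinearMap.mem_ker, ← LinearMap.comp_apply, ← hαd_apply φ, hφ]
      rfl
    set e := π.quotKerEquivOfSurjective hπ
    set ψ : M →ₗ[R] R := ((LinearMap.ker π).liftQ φ hker) ∘ₗ e.symm.toLinearMap with hψ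
    have hfact : ∀ v, ψ (π v) = φ v := by
      intro v
      rw [hψ, LinearMap.comp_apply]
      have : e.symm (π v) = Submodule.Quotient.mk v := by
        rw [LinearEquiv.symm_apply_eq]
        rfl
      rw [show (↑e.symm : M →ₗ[R] ((Fin b → R) ⧸ LinearMap.ker π)) (π v)
        = Submodule.Quotient.mk v from this]
      exact Submodule.liftQ_apply _ _ _
    have : g φ = theta M (π.rTensor E w) ψ := by
      rw [theta_natural, hg]
      congr 1
      exact LinearMap.ext fun v => (hfact v).symm
    rw [this, hz, LinearMap.zero_apply]
  -- extend g through αd using injectivity of E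
  set gbar : (LinearMap.range αd) →ₗ[R] E :=
    ((LinearMap.ker αd).liftQ g hg0) ∘ₗ (αd.quotKerEquivRange).symm.toLinearMap with hgbar
  have hgbar_apply : ∀ φ, gbar ⟨αd φ, LinearMap.mem_range_self _ φ⟩ = g φ := by
    intro φ
    rw [hgbar, LinearMap.comp_apply]
    have : (αd.quotKerEquivRange).symm ⟨αd φ, LinearMap.mem_range_self _ φ⟩
        = Submodule.Quotient.mk φ := by
      rw [LinearEquiv.symm_apply_eq]
      exact Subtype.ext (LinearMap.quotKerEquivRange_apply_mk αd φ).symm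
    rw [show (↑αd.quotKerEquivRange.symm :
        ↥(LinearMap.range αd) →ₗ[R] (((Fin b → R) →ₗ[R] R) ⧸ LinearMap.ker αd))
        ⟨αd φ, LinearMap.mem_range_self _ φ⟩ = Submodule.Quotient.mk φ from this]
    exact Submodule.liftQ_apply _ _ _
  obtain ⟨h, hh⟩ := hBaer.extension_property (M := LinearMap.range αd) (N := ((Fin a → R) →ₗ[R] R))
    (LinearMap.range αd).subtype (Submodule.injective_subtype _) gbar
  have hhg : ∀ φ, h (αd φ) = g φ := by
    intro φ
    have := congrArg (fun t => t ⟨αd φ, LinearMap.mem_range_self _ φ⟩) hh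
    simp only [LinearMap.comp_apply, Submodule.coe_subtype] at this
    rw [this, hgbar_apply]
  -- pull back h through theta on the free module R^a
  set v := sigma a h with hv
  have hθv : theta (R := R) (E := E) (Fin a → R) v = h := theta_sigma a h
  have hkey : theta (R := R) (E := E) (Fin b → R) (α.rTensor E v) = theta _ w := by
    refine LinearMap.ext fun φ => ?_
    rw [theta_natural, ← hαd_apply φ]
    rw [show theta (R := R) (E := E) (Fin a → R) v (αd φ) = h (αd φ) from
      LinearMap.congr_fun hθv (αd φ)]
    rw [hhg φ]
  have hw : α.rTensor E v = w :=
    (Function.LeftInverse.injective (g := sigma b) (sigma_theta b)) hkey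
  have hπα : π ∘ₗ α = 0 := by
    refine LinearMap.ext fun x => ?_
    have : α x ∈ LinearMap.ker π := hrange ▸ LinearMap.mem_range_self α x
    simpa using this
  rw [← hw, ← LinearMap.rTensor_comp_apply, hπα]
  simp
end Inj


section Small
universe u v
variable {R : Type u} [CommRing R] [IsNoetherianRing R] [IsLocalRing R]

/-- If the residue field embeds (as a set) into a type in universe `v`, then each `R/m^n`
is `v`-small. -/
lemma small_quotient_pow (hk : Small.{v} (R ⧸ maximalIdeal R)) (n : ℕ) :
    Small.{v} (R ⧸ (maximalIdeal R ^ n : Ideal R)) := by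
  induction n with
  | zero =>
    rw [pow_zero, Ideal.one_eq_top]
    have : Subsingleton (R ⧸ (⊤ : Ideal R)) := Submodule.Quotient.subsingleton_iff.mpr rfl
    infer_instance
  | succ n ih =>
    set I : Ideal R := maximalIdeal R ^ n with hI
    set J : Ideal R := maximalIdeal R ^ (n + 1) with hJ
    have hle : J ≤ I := Ideal.pow_le_pow_right (Nat.le_succ n)
    -- the factor map
    set π : (R ⧸ J) →ₗ[R] (R ⧸ I) :=
      Submodule.mapQ (J : Submodule R R) (I : Submodule R R) LinearMap.id hle with hπdef
    have hπmk : ∀ r : R, π (Submodule.Quotient.mk r) = Submodule.Quotient.mk r := by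
      intro r; rfl
    have hπsurj : Function.Surjective π := by
      intro y
      obtain ⟨r, rfl⟩ := Submodule.Quotient.mk_surjective _ y
      exact ⟨Submodule.Quotient.mk r, hπmk r⟩
    -- the kernel is small: it is spanned by the images of generators of m^n, with
    -- coefficients mod m
    have hKsmall : Small.{v} (LinearMap.ker π) := by
      obtain ⟨s, hs⟩ : (I : Submodule R R).FG := IsNoetherian.noetherian _
      -- section of R → R/m
      set sec : (R ⧸ maximalIdeal R) → R :=
        Function.surjInv (Submodule.Quotient.mk_surjective (maximalIdeal R)) with hsec
      have hsec_spec : ∀ y, (Submodule.Quotient.mk (sec y) : R ⧸ maximalIdeal R) = y :=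
        fun y => Function.surjInv_eq _ y
      set ρ : ((↥s : Type u) → R ⧸ maximalIdeal R) → R ⧸ J :=
        fun y => Submodule.Quotient.mk (∑ i : ↥s, sec (y i) * (i : R)) with hρ
      have hmem : ∀ i : ↥s, (i : R) ∈ I := by
        intro i
        rw [← hs]
        exact Submodule.subset_span i.2
      have hρK : ∀ y, ρ y ∈ LinearMap.ker π := by
        intro y
        rw [LinearMap.mem_ker, hρ, hπmk, Submodule.Quotient.mk_eq_zero]
        exact Submodule.sum_mem _ fun i _ => Ideal.mul_mem_left _ _ (hmem i)
      have hρsurj : ∀ x ∈ LinearMap.ker π, ∃ y, ρ y = x := by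
        intro x hx
        obtain ⟨r, rfl⟩ := Submodule.Quotient.mk_surjective _ x
        rw [LinearMap.mem_ker, hπmk, Submodule.Quotient.mk_eq_zero] at hx
        have hr : r ∈ Submodule.span R (s : Set R) := by
          have : r ∈ Ideal.span (s : Set R) := hs ▸ hx
          exact this
        obtain ⟨c, -, hc⟩ := Submodule.mem_span_finset.mp hr
        refine ⟨fun i => Submodule.Quotient.mk (c (i : R)), ?_⟩
        rw [hρ]
        have hc' : (∑ i : ↥s, c (i : R) • (i : R)) = r := by
          rw [Finset.sum_coe_sort s (fun i => c i • i)]; exact hc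
        have key : (∑ i : ↥s, sec (Submodule.Quotient.mk (c (i : R))) * (i : R)) - r ∈ J := by
          have heq : (∑ i : ↥s, sec (Submodule.Quotient.mk (c (i : R))) * (i : R)) - r
              = ∑ i : ↥s, (sec (Submodule.Quotient.mk (c (i : R))) - c (i : R)) * (i : R) := by
            conv_lhs => rw [← hc']
            rw [← Finset.sum_sub_distrib]
            refine Finset.sum_congr rfl fun i _ => ?_
            rw [sub_mul, smul_eq_mul]
          rw [heq, hJ, pow_succ']
          refine Submodule.sum_mem _ fun i _ => ?_
          have hδ : sec (Submodule.Quotient.mk (c (i : R))) - c (i : R) ∈ maximalIdeal R := by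
            rw [← Submodule.Quotient.mk_eq_zero, Submodule.Quotient.mk_sub, hsec_spec, sub_self]
          exact Ideal.mul_mem_mul hδ (hmem i)
        rw [← sub_eq_zero, ← Submodule.Quotient.mk_sub, Submodule.Quotient.mk_eq_zero]
        exact key
      -- conclude smallness of the kernel
      have : Small.{v} ((↥s : Type u) → R ⧸ maximalIdeal R) := by
        haveI := hk
        haveI : Small.{v} (↥s : Type u) := by
          haveI : Finite (↥s : Type u) := inferInstance
          exact Countable.toSmall _
        infer_instance
      refine small_of_surjective (f := fun y => (⟨ρ y, hρK y⟩ : LinearMap.ker π)) ?_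
      rintro ⟨x, hx⟩
      obtain ⟨y, hy⟩ := hρsurj x hx
      exact ⟨y, Subtype.ext hy⟩
    -- now the section trick for the surjection π
    haveI := ih
    haveI := hKsmall
    set t : (R ⧸ I) → (R ⧸ J) := Function.surjInv hπsurj with ht
    have hts : ∀ y, π (t y) = y := fun y => Function.surjInv_eq hπsurj y
    have : Function.Injective (fun x : R ⧸ J =>
        ((π x, ⟨x - t (π x), by rw [LinearMap.mem_ker, map_sub, hts, sub_self]⟩) :
          (R ⧸ I) × (LinearMap.ker π))) := by
      intro x x' h
      have h1 : π x = π x' := congrArg Prod.fst h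
      have h2 : x - t (π x) = x' - t (π x') := congrArg (fun z => (z.2 : R ⧸ J)) h
      rw [h1] at h2
      exact sub_left_inj.mp h2
    exact small_of_injective this



lemma small_of_resField (hk : Small.{v} (R ⧸ maximalIdeal R)) : Small.{v} R := by
  haveI := fun n => small_quotient_pow (R := R) hk n
  have hKrull : (⨅ n : ℕ, maximalIdeal R ^ n) = ⊥ :=
    Ideal.iInf_pow_eq_bot_of_isLocalRing _ (maximalIdeal.isMaximal R).ne_top
  have hinj : Function.Injective (fun r : R =>
      (fun n : ℕ => (Submodule.Quotient.mk r : R ⧸ (maximalIdeal R ^ n : Ideal R))))  := by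
    intro r r' h
    have : ∀ n : ℕ, r - r' ∈ (maximalIdeal R ^ n : Ideal R) := by
      intro n
      have := congrFun h n
      rwa [← sub_eq_zero, ← Submodule.Quotient.mk_sub, Submodule.Quotient.mk_eq_zero] at this
    have : r - r' ∈ (⨅ n : ℕ, maximalIdeal R ^ n) := Submodule.mem_iInf _ |>.mpr this
    rw [hKrull] at this
    rw [← sub_eq_zero]
    exact this
  exact small_of_injective hinj

lemma small_of_socle {E : Type v} [AddCommGroup E] [Module R E] (u : E) (hu : u ≠ 0)
    (hmu : ∀ r ∈ maximalIdeal R, r • u = 0) : Small.{v} R := by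
  refine small_of_resField ?_
  have hle : maximalIdeal R ≤ LinearMap.ker (LinearMap.toSpanSingleton R E u) := by
    intro r hr
    rw [LinearMap.mem_ker, LinearMap.toSpanSingleton_apply]
    exact hmu r hr
  set f : (R ⧸ maximalIdeal R) →ₗ[R] E :=
    (maximalIdeal R : Submodule R R).liftQ (LinearMap.toSpanSingleton R E u) hle with hf
  have hker : LinearMap.ker (LinearMap.toSpanSingleton R E u) ≤ maximalIdeal R := by
    intro r hr
    rw [LinearMap.mem_ker, LinearMap.toSpanSingleton_apply] at hr
    by_contra hrm
    have hunit : IsUnit r := by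
      rw [IsLocalRing.mem_maximalIdeal] at hrm
      exact not_not.mp (fun h => hrm (mem_nonunits_iff.mpr h))
    apply hu
    have h1 : ((hunit.unit⁻¹ : Rˣ) : R) * r = 1 := hunit.val_inv_mul
    have h2 : (((hunit.unit⁻¹ : Rˣ) : R) * r) • u = u := by rw [h1, one_smul]
    rw [← h2, mul_smul, hr, smul_zero]
  have hfinj : Function.Injective f := by
    rw [← LinearMap.ker_eq_bot, hf, Submodule.ker_liftQ_eq_bot']
    exact (le_antisymm hker hle).symm
  exact small_of_injective hfinj

end Small


/-- The identity map `Twist R p M e → M`. -/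
def unTwist (R : Type*) (p : ℕ) {M : Type*} {e : ℕ} (m : Twist R p M e) : M := m

section TwistFinite
variable (R : Type*) [CommRing R] (p : ℕ) [Fact p.Prime] [CharP R p]

lemma twist_span (hFF : IsFFinite R p) (e : ℕ) :
    ∃ (ι : Type) (_ : Fintype ι) (g : ι → R), ∀ m : R, ∃ c : ι → R,
      m = ∑ i, (c i) ^ (p ^ e) * g i := by
  induction e with
  | zero =>
    refine ⟨Unit, inferInstance, fun _ => 1, fun m => ⟨fun _ => m, ?_⟩⟩
    simp
  | succ e ih =>
    obtain ⟨ι, _, g, hg⟩ := ih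
    have h1 : ∃ (κ : Type) (_ : Fintype κ) (t : κ → R), ∀ m : R, ∃ c : κ → R,
        m = ∑ j, (c j) ^ p * t j := by
      have hFF' : Module.Finite R (Twist R p R 1) := hFF
      obtain ⟨s, hs⟩ := Module.finite_def.mp hFF'
      set ev : Fin s.card ≃ ↥s := s.equivFin.symm with hev
      refine ⟨Fin s.card, inferInstance, fun j => unTwist R p ((ev j : Twist R p R 1)),
        fun m => ?_⟩
      have hm : (toTwist R p m 1) ∈ Submodule.span R (s : Set (Twist R p R 1)) := by
        rw [hs]; trivial
      obtain ⟨f, -, hf⟩ := Submodule.mem_span_finset.mp hm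
      have hf' : (∑ i ∈ s, (f i) ^ (p ^ 1) * (unTwist R p i)) = m := hf
      refine ⟨fun j => f ((ev j : Twist R p R 1)), ?_⟩
      have h2 : ∑ j : Fin s.card, (f ((ev j : Twist R p R 1))) ^ (p ^ 1)
          * (unTwist R p ((ev j : Twist R p R 1)))
          = ∑ i : ↥s, (f ((i : Twist R p R 1))) ^ (p ^ 1) * (unTwist R p (i : Twist R p R 1)) :=
        Equiv.sum_comp ev (fun i => (f ((i : Twist R p R 1))) ^ (p ^ 1)
          * (unTwist R p (i : Twist R p R 1)))
      rw [pow_one] at h2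
      show m = ∑ j : Fin s.card, f ((ev j : Twist R p R 1)) ^ p
        * unTwist R p ((ev j : Twist R p R 1))
      rw [h2, Finset.sum_coe_sort s (fun i => (f i) ^ p * (unTwist R p i))]
      rw [pow_one] at hf'
      exact hf'.symm
    obtain ⟨κ, _, t, ht⟩ := h1
    refine ⟨ι × κ, inferInstance, fun ij => (g ij.1) ^ p * t ij.2, fun m => ?_⟩
    obtain ⟨c, hc⟩ := ht m
    choose d hd using fun j => hg (c j)
    refine ⟨fun ij => d ij.2 ij.1, ?_⟩
    calc m = ∑ j, (c j) ^ p * t j := hc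
    _ = ∑ j, (∑ i, (d j i) ^ (p ^ e) * g i) ^ p * t j := by
        refine Finset.sum_congr rfl fun j _ => ?_
        rw [← hd j]
    _ = ∑ j, (∑ i, ((d j i) ^ (p ^ e) * g i) ^ p) * t j := by
        refine Finset.sum_congr rfl fun j _ => ?_
        rw [sum_pow_char]
    _ = ∑ j, ∑ i, (d j i) ^ (p ^ (e + 1)) * ((g i) ^ p * t j) := by
        refine Finset.sum_congr rfl fun j _ => ?_
        rw [Finset.sum_mul]
        refine Finset.sum_congr rfl fun i _ => ?_
        rw [mul_pow, ← pow_mul, ← pow_succ, mul_assoc]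
    _ = ∑ ij : ι × κ, (d ij.2 ij.1) ^ (p ^ (e + 1)) * ((g ij.1) ^ p * t ij.2) := by
        rw [Fintype.sum_prod_type]
        exact Finset.sum_comm

lemma twist_finite (hFF : IsFFinite R p) (e : ℕ) : Module.Finite R (Twist R p R e) := by
  obtain ⟨ι, _, g, hg⟩ := twist_span R p hFF e
  rw [Module.finite_def, Submodule.fg_def]
  refine ⟨Set.range (fun i => (toTwist R p (g i) e : Twist R p R e)), Set.finite_range _, ?_⟩
  rw [Submodule.eq_top_iff']
  intro x
  obtain ⟨c, hx⟩ := hg (x : R)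
  have hx2 : x = ∑ i, c i • (toTwist R p (g i) e : Twist R p R e) := hx
  rw [hx2]
  exact Submodule.sum_mem _ fun i _ =>
    Submodule.smul_mem _ _ (Submodule.subset_span ⟨i, rfl⟩)

end TwistFinite

/-- For an F-finite reduced local ring `R` of characteristic `p`,
`A_e = {c ∈ R : the map φ_{c,e} : R → R^{1/p^e}, 1 ↦ c^{1/p^e}, does not split}`. -/
theorem AeSet_eq_nonsplitting_set
    (R : Type*) [CommRing R] [IsNoetherianRing R] [IsLocalRing R] [IsReduced R]
    (p : ℕ) [Fact p.Prime] [CharP R p] (hFF : IsFFinite R p)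
    (E : Type*) [AddCommGroup E] [Module R E] (u : E) (hE : IsInjHullSocle R E u)
    (e : ℕ) :
    AeSet R p E u e = { c : R | ¬ SplitsFrob R p c e } := by
  obtain ⟨hEinj, hu0, hmu, hsoc, hess⟩ := hE
  haveI := twist_finite R p hFF e
  ext c
  simp only [AeSet, Set.mem_setOf_eq]
  constructor
  · intro hc hsplit
    obtain ⟨ψ, hψ⟩ := hsplit
    apply hu0
    have h1 := congrArg (fun z => (TensorProduct.lid R E) (ψ.rTensor E z)) hc
    simp only [map_zero] at h1
    rw [LinearMap.rTensor_tmul, hψ, TensorProduct.lid_tmul, one_smul] at h1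
    exact h1
  · intro hns
    by_contra hc
    haveI : Small.{_} R := small_of_socle u hu0 hmu
    have hinj := theta_injective hEinj (Twist R p R e)
    have hθ : theta (R := R) (E := E) (Twist R p R e) (toTwist R p c e ⊗ₜ[R] u) ≠ 0 := by
      intro h0
      exact hc (hinj (by rw [h0, map_zero]))
    obtain ⟨ψ, hψ⟩ : ∃ ψ, theta (R := R) (E := E) (Twist R p R e)
        (toTwist R p c e ⊗ₜ[R] u) ψ ≠ 0 := by
      by_contra h
      push_neg at h
      exact hθ (LinearMap.ext h)
    rw [theta_tmul] at hψ
    have hrm : ψ (toTwist R p c e) ∉ maximalIdeal R := fun hrm => hψ (hmu _ hrm)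
    have hunit : IsUnit (ψ (toTwist R p c e)) := by
      rw [IsLocalRing.mem_maximalIdeal] at hrm
      exact not_not.mp (fun h => hrm (mem_nonunits_iff.mpr h))
    refine hns ⟨((hunit.unit⁻¹ : Rˣ) : R) • ψ, ?_⟩
    rw [LinearMap.smul_apply, smul_eq_mul]
    exact hunit.val_inv_mul
end

section
/- Let (R, m, k) be an F-finite reduced local ring of characteristic p and let P(R) = { c ∈ R : for all sufficiently large e, the R-linear map R → R^{1/p^e} sending 1 to c^{1/p^e} does not split }. Then P(R) is either a prime ideal of R or the unit ideal. -/
set_option linter.unusedVariables false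

open TensorProduct Filter IsLocalRing

section Aux

variable {R : Type*} [CommRing R] {p : ℕ} [Fact p.Prime] [CharP R p]

lemma twist_smul {e : ℕ} (r : R) (x : Twist R p R e) :
    r • x = toTwist R p (r ^ p ^ e * (show R from x)) e := rfl

/-- Multiplication by `d` as an `R`-linear endomorphism of `Twist R p R e`. -/
def twistMulRight (p : ℕ) [Fact p.Prime] [CharP R p] (d : R) (e : ℕ) :
    Twist R p R e →ₗ[R] Twist R p R e where
  toFun x := toTwist R p ((show R from x) * d) e
  map_add' x y := by
    change ((show R from x) + (show R from y)) * d
      = (show R from x) * d + (show R from y) * d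
    ring
  map_smul' r x := by
    change (r ^ p ^ e * (show R from x)) * d = r ^ p ^ e * ((show R from x) * d)
    ring

lemma splits_of_dvd {c d : R} {e : ℕ} (h : SplitsFrob R p (c * d) e) :
    SplitsFrob R p c e := by
  obtain ⟨ψ, hψ⟩ := h
  exact ⟨ψ.comp (twistMulRight p d e), hψ⟩

/-- Restriction of scalars: an `R`-linear map `Twist e₁ → R` induces
`Twist (e₁+e₂) → Twist e₂`. -/
def twistRestrict {e1 : ℕ} (ψ : Twist R p R e1 →ₗ[R] R) (e2 : ℕ) :
    Twist R p R (e1 + e2) →ₗ[R] Twist R p R e2 where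
  toFun x := toTwist R p (ψ (toTwist R p (show R from x) e1)) e2
  map_add' x y := ψ.map_add _ _
  map_smul' r x := by
    have key : toTwist R p (show R from
        (r • x : Twist R p R (e1 + e2))) e1
        = (r ^ p ^ e2) • toTwist R p (show R from x) e1 := by
      show toTwist R p (r ^ p ^ (e1 + e2) * (show R from x)) e1
        = toTwist R p ((r ^ p ^ e2) ^ p ^ e1 * (show R from x)) e1
      rw [← pow_mul, ← pow_add, Nat.add_comm e2 e1]
    show toTwist R p (ψ (toTwist R p (show R from
        (r • x : Twist R p R (e1 + e2))) e1)) e2 = _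
    rw [key, ψ.map_smul]
    rfl

lemma splits_comp {a b : R} {e1 e2 : ℕ} (h1 : SplitsFrob R p a e1)
    (h2 : SplitsFrob R p b e2) : SplitsFrob R p (b ^ p ^ e1 * a) (e1 + e2) := by
  obtain ⟨ψ1, hψ1⟩ := h1
  obtain ⟨ψ2, hψ2⟩ := h2
  refine ⟨ψ2.comp (twistRestrict ψ1 e2), ?_⟩
  have key : toTwist R p (show R from
      toTwist R p (b ^ p ^ e1 * a) (e1 + e2)) e1
      = b • toTwist R p a e1 := rfl
  show ψ2 (toTwist R p (ψ1 (toTwist R p (show R from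
      toTwist R p (b ^ p ^ e1 * a) (e1 + e2)) e1)) e2) = 1
  rw [key, ψ1.map_smul, hψ1]
  have : (b • (1 : R) : R) = b := by simp
  rw [show toTwist R p (b • (1 : R)) e2 = toTwist R p b e2 by rw [this]]
  exact hψ2

lemma splits_mul {a b : R} {e1 e2 : ℕ} (h1 : SplitsFrob R p a e1)
    (h2 : SplitsFrob R p b e2) : SplitsFrob R p (a * b) (e1 + e2) := by
  have h := splits_comp h1 h2
  have hp : 1 ≤ p ^ e1 := Nat.one_le_pow _ _ (Fact.out : p.Prime).pos
  have : b ^ p ^ e1 * a = (a * b) * b ^ (p ^ e1 - 1) := by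
    conv_lhs => rw [show p ^ e1 = 1 + (p ^ e1 - 1) by omega]
    ring
  rw [this] at h
  exact splits_of_dvd h

lemma not_splits_zero [Nontrivial R] (e : ℕ) : ¬ SplitsFrob R p (0 : R) e := by
  rintro ⟨ψ, hψ⟩
  have : toTwist R p (0 : R) e = (0 : Twist R p R e) := rfl
  rw [this, ψ.map_zero] at hψ
  exact zero_ne_one hψ

lemma splits_add [IsLocalRing R] {a b : R} {e : ℕ}
    (h : SplitsFrob R p (a + b) e) : SplitsFrob R p a e ∨ SplitsFrob R p b e := by
  obtain ⟨ψ, hψ⟩ := h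
  have hab : ψ (toTwist R p a e) + ψ (toTwist R p b e) = 1 := by
    rw [← ψ.map_add]; exact hψ
  have := IsLocalRing.isUnit_or_isUnit_of_add_one hab
  rcases this with h | h
  · left
    obtain ⟨v, hv⟩ := h
    refine ⟨(v⁻¹ : Rˣ).val • ψ, ?_⟩
    show (v⁻¹ : Rˣ).val * ψ (toTwist R p a e) = 1
    rw [← hv, Units.inv_mul]
  · right
    obtain ⟨v, hv⟩ := h
    refine ⟨(v⁻¹ : Rˣ).val • ψ, ?_⟩
    show (v⁻¹ : Rˣ).val * ψ (toTwist R p b e) = 1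
    rw [← hv, Units.inv_mul]

end Aux

/-- For an F-finite reduced local ring `R` of characteristic `p`, the
splitting prime `𝒫(R) = {c : for all e ≫ 0 the map 1 ↦ c^{1/p^e} does not split}` is either
a prime ideal of `R` or the unit ideal. -/
theorem splittingPrime_prime_or_unit
    (R : Type*) [CommRing R] [IsNoetherianRing R] [IsLocalRing R] [IsReduced R]
    (p : ℕ) [Fact p.Prime] [CharP R p] (hFF : IsFFinite R p) :
    SplittingPrimeSet R p = Set.univ ∨
      ∃ I : Ideal R, I.IsPrime ∧ (I : Set R) = SplittingPrimeSet R p := by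
  by_cases huniv : SplittingPrimeSet R p = Set.univ
  · exact Or.inl huniv
  right
  -- the splitting prime as an ideal
  set I : Ideal R :=
    { carrier := SplittingPrimeSet R p
      zero_mem' := Eventually.of_forall fun e => not_splits_zero e
      add_mem' := by
        intro a b ha hb
        filter_upwards [ha, hb] with e ha hb hs
        rcases splits_add hs with h | h
        · exact ha h
        · exact hb h
      smul_mem' := by
        intro r c hc
        filter_upwards [hc] with e hc hs
        exact hc (splits_of_dvd (c := c) (d := r)
          (by rwa [smul_eq_mul, mul_comm] at hs)) } with hI
  refine ⟨I, ⟨?_, ?_⟩, rfl⟩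
  · -- I ≠ ⊤
    intro htop
    apply huniv
    ext c
    simp only [Set.mem_univ, iff_true]
    have h1 : (1 : R) ∈ SplittingPrimeSet R p := by
      have : (1 : R) ∈ I := htop ▸ Submodule.mem_top
      exact this
    have hc : c • (1 : R) ∈ SplittingPrimeSet R p := by
      have : c • (1 : R) ∈ I := I.smul_mem' c h1
      exact this
    simpa using hc
  · -- prime condition
    intro a b hab
    by_contra hcon
    push_neg at hcon
    obtain ⟨ha, hb⟩ := hcon
    have ha' : ∃ᶠ e in atTop, SplitsFrob R p a e := by
      have h : ¬ (∀ᶠ e in atTop, ¬ SplitsFrob R p a e) := ha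
      simpa [Filter.not_eventually, Filter.frequently_atTop] using h
    have hb' : ∃ᶠ e in atTop, SplitsFrob R p b e := by
      have h : ¬ (∀ᶠ e in atTop, ¬ SplitsFrob R p b e) := hb
      simpa [Filter.not_eventually, Filter.frequently_atTop] using h
    have hab' : (a * b : R) ∈ SplittingPrimeSet R p := hab
    rw [SplittingPrimeSet, Set.mem_setOf_eq, ← Filter.not_frequently] at hab'
    apply hab'
    rw [Filter.frequently_atTop] at ha' hb' ⊢
    intro N
    obtain ⟨e1, _, h1⟩ := ha' 0
    obtain ⟨e2, he2, h2⟩ := hb' N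
    exact ⟨e1 + e2, he2.trans le_add_self, splits_mul h1 h2⟩
end

section
/- Let (R, m, k) be an F-pure F-finite reduced local ring of characteristic p. Then every minimal prime Q of R is contained in the splitting prime P(R). -/
set_option linter.unusedVariables false

open TensorProduct Filter IsLocalRing

lemma exists_ne_zero_mul_eq_zero_of_mem_minimalPrimes
    {R : Type*} [CommRing R] [Nontrivial R] {Q : Ideal R} (hQ : Q ∈ minimalPrimes R)
    {c : R} (hc : c ∈ Q) : ∃ d : R, d ≠ 0 ∧ d * c = 0 := by
  haveI hQp : Q.IsPrime := hQ.1.1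
  have hmem : algebraMap R (Localization Q.primeCompl) c ∈
      IsLocalRing.maximalIdeal (Localization Q.primeCompl) :=
    (IsLocalization.AtPrime.to_map_mem_maximal_iff _ Q c).2 hc
  haveI := Ring.KrullDimLE.of_isLocalization Q hQ (Localization Q.primeCompl)
  obtain ⟨n, hn⟩ := Ring.KrullDimLE.isNilpotent_iff_mem_maximalIdeal.2 hmem
  rw [← map_pow] at hn
  obtain ⟨s, hs⟩ := (IsLocalization.map_eq_zero_iff Q.primeCompl _ _).1 hn
  have hs0 : (s : R) ≠ 0 := fun h => s.2 (h ▸ Q.zero_mem)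
  clear hn hmem
  induction n with
  | zero => exact absurd (by simpa using hs) hs0
  | succ n ih =>
    by_cases h : (s : R) * c ^ n = 0
    · exact ih h
    · exact ⟨(s : R) * c ^ n, h, by rw [mul_assoc, ← pow_succ, hs]⟩

/-- In an F-pure F-finite reduced local ring `R` of characteristic `p`,
every minimal prime of `R` is contained in the splitting prime `𝒫(R)`. -/
theorem minimalPrime_subset_splittingPrime
    (R : Type*) [CommRing R] [IsNoetherianRing R] [IsLocalRing R] [IsReduced R]
    (p : ℕ) [Fact p.Prime] [CharP R p] (hFF : IsFFinite R p)
    (hpure : IsFPure R p)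
    (Q : Ideal R) (hQ : Q ∈ minimalPrimes R) :
    (Q : Set R) ⊆ SplittingPrimeSet R p := by
  intro c hc
  obtain ⟨d, hd0, hdc⟩ := exists_ne_zero_mul_eq_zero_of_mem_minimalPrimes hQ hc
  refine Filter.Eventually.of_forall fun e => ?_
  rintro ⟨ψ, hψ⟩
  have hpe : p ^ e ≠ 0 := pow_ne_zero e (Fact.out : p.Prime).ne_zero
  obtain ⟨n, hn⟩ := Nat.exists_eq_succ_of_ne_zero hpe
  have hdc' : d ^ p ^ e * c = 0 := by
    rw [hn, pow_succ, mul_assoc, hdc, mul_zero]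
  have key : d • toTwist R p c e = (0 : Twist R p R e) := by
    show d ^ p ^ e • c = (0 : R)
    rw [smul_eq_mul, hdc']
  apply hd0
  calc d = d • ψ (toTwist R p c e) := by rw [hψ]; simp
    _ = ψ (d • toTwist R p c e) := (ψ.map_smul d _).symm
    _ = 0 := by rw [key, map_zero]
end
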